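/- Let p be a piecewise affine function on [0, N·T] with breakpoint values p₀,…,p_N, and let γ ≥ 0. Suppose p₀ + γ ≤ p̄₁, p_N + γ ≤ p̄_N, and for 1 ≤ s ≤ N-1, p_s + γ ≤ min(p̄_s, p̄_{s+1}). Then for every s ∈ {1,…,N}, every t ∈ [(s-1)T, sT), and every activation value v ∈ [-γ, γ], p(t) + v ≤ p̄_s. -/
import Mathlib


/-- Breakpoint bounds imply the continuous-time upper power constraint:
if `P 0 + γ ≤ p̄ 1`, `P N + γ ≤ p̄ N`, and `P s + γ ≤ min (p̄ s) (p̄ (s+1))`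
for `1 ≤ s ≤ N-1`, then the target power `p(t) + v` with `|v| ≤ γ` stays below
`p̄ s` throughout the `s`-th interval. -/
theorem breakpoint_bounds_imply_power_constraint (N : ℕ) (T : ℝ) (hT : 0 < T)
    (P pbar : ℕ → ℝ) (γ : ℝ) (hγ : 0 ≤ γ) (p : ℝ → ℝ)
    (hp : ∀ s : ℕ, 1 ≤ s → s ≤ N →
      ∀ t ∈ Set.Ico (((s : ℝ) - 1) * T) ((s : ℝ) * T),
        p t = P (s - 1) + (P s - P (s - 1)) * (t - ((s : ℝ) - 1) * T) / T)
    (h0 : P 0 + γ ≤ pbar 1)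
    (hN : P N + γ ≤ pbar N)
    (hmid : ∀ s : ℕ, 1 ≤ s → s ≤ N - 1 → P s + γ ≤ min (pbar s) (pbar (s + 1))) :
    ∀ s : ℕ, 1 ≤ s → s ≤ N →
      ∀ t ∈ Set.Ico (((s : ℝ) - 1) * T) ((s : ℝ) * T),
        ∀ v : ℝ, |v| ≤ γ → p t + v ≤ pbar s := by
  intro s hs1 hsN t ht v hv
  obtain ⟨htl, htr⟩ := ht
  -- endpoint bounds
  have hleft : P (s - 1) + γ ≤ pbar s := by
    rcases eq_or_lt_of_le hs1 with h | h
    · simpa [← h] using h0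
    · have h1 : 1 ≤ s - 1 := by omega
      have h2 : s - 1 ≤ N - 1 := by omega
      have := hmid (s - 1) h1 h2
      have hsub : s - 1 + 1 = s := by omega
      rw [hsub] at this
      exact this.trans (min_le_right _ _)
  have hright : P s + γ ≤ pbar s := by
    rcases eq_or_lt_of_le hsN with h | h
    · simpa [h] using hN
    · exact (hmid s hs1 (by omega)).trans (min_le_left _ _)
  have hpt := hp s hs1 hsN t ⟨htl, htr⟩
  set θ : ℝ := (t - ((s : ℝ) - 1) * T) / T with hθ
  have hθ0 : 0 ≤ θ := div_nonneg (by linarith) hT.le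
  have hθ1 : θ ≤ 1 := by
    rw [hθ, div_le_one hT]
    have : (s : ℝ) * T = ((s : ℝ) - 1) * T + T := by ring
    linarith
  have hpt' : p t = (1 - θ) * P (s - 1) + θ * P s := by
    rw [hpt, hθ]; field_simp; ring
  have hvγ : v ≤ γ := (le_abs_self v).trans hv
  have : p t ≤ pbar s - γ := by
    rw [hpt']
    have h1 : (1 - θ) * P (s - 1) ≤ (1 - θ) * (pbar s - γ) :=
      mul_le_mul_of_nonneg_left (by linarith) (by linarith)
    have h2 : θ * P s ≤ θ * (pbar s - γ) :=
      mul_le_mul_of_nonneg_left (by linarith) hθ0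
    nlinarith
  linarith
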